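/- arXiv:1001.0034 — 2 statements merged into one kernel-verified Lean document; each statement's English description precedes it below -/
import Mathlib

section
/- Let r ≥ 1 be an integer, let h be an integer with h ≥ r, let q be a real number with 0 < q < 1, let x > 0 be real, and let s ∈ ℂ. Then the series Σ_{(m_1,…,m_r) ∈ ℕ^r} (-1)^{m_1+⋯+m_r} q^{Σ_{j=1}^r (h-j+1) m_j} [m_1+⋯+m_r+x]_q^{-s} converges absolutely and equals Σ_{m=0}^{∞} binom_q(m+r-1, m) · (-q^{h-r+1})^m [m+x]_q^{-s}, where binom_q(m+r-1, m) := ∏_{i=1}^{m} (1-q^{r-1+i})/(1-q^i) and for a positive real t, t^{-s} := exp(-s·log t). -/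
/-- The `q`-number `[y]_q = (1 - q^y)/(1 - q)`, with a real exponent (rpow). -/
noncomputable def qnum (q y : ℝ) : ℝ := (1 - q ^ y) / (1 - q)

/-- The Gaussian (q-binomial) coefficient
`binom_q(m + r - 1, m) = ∏_{i=1}^{m} (1 - q^{r-1+i}) / (1 - q^i)`. -/
noncomputable def gaussBinom (q : ℝ) (r m : ℕ) : ℝ :=
  ∏ i ∈ Finset.range m, (1 - q ^ (r - 1 + (i + 1))) / (1 - q ^ (i + 1))

/-!
Group the terms of the `r`-fold series by `n = m₁ + ⋯ + mᵣ`. The exponent of `q` splits as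
`(h - r + 1) n + ∑ⱼ (r - 1 - j) mⱼ`, and the generating polynomial of the weight
`∑ⱼ (r - 1 - j) mⱼ` over the compositions of `n` into `r` parts is the Gaussian coefficient
`binom_q(n + r - 1, n)`: splitting off the first part, both satisfy
`G_{r+1}(n) = ∑_{a + b = n} q^{r a} G_r(b)`, which for the Gaussian coefficients is the q-Pascal
rule.
The regrouping is legitimate because the series converges absolutely: as `h ≥ r`, each term is
bounded by a constant times `q^{m₁ + ⋯ + mᵣ}`, since `[y]_q` stays between `[x]_q` and `1/(1 - q)`
for `y ≥ x`.
-/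

open Finset

section GaussBinom

variable {q : ℝ}

lemma gaussBinom_eq_div {r : ℕ} (hr : 1 ≤ r) (m : ℕ) : gaussBinom q r m =
    (∏ i ∈ range m, (1 - q ^ (r + i))) / ∏ i ∈ range m, (1 - q ^ (i + 1)) := by
  rw [gaussBinom, prod_div_distrib]
  congr 1
  exact prod_congr rfl fun i _ => by rw [show r - 1 + (i + 1) = r + i by omega]

lemma gaussBinom_one (hq : ∀ k : ℕ, q ^ (k + 1) ≠ 1) (m : ℕ) : gaussBinom q 1 m = 1 :=
  prod_eq_one fun i _ => by rw [Nat.sub_self, zero_add, div_self (sub_ne_zero.2 (hq i).symm)]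

lemma gaussBinom_succ_succ (hq : ∀ k : ℕ, q ^ (k + 1) ≠ 1) {r : ℕ} (hr : 1 ≤ r) (n : ℕ) :
    gaussBinom q (r + 1) (n + 1) = gaussBinom q r (n + 1) + q ^ r * gaussBinom q (r + 1) n := by
  have hden : ∏ i ∈ range n, (1 - q ^ (i + 1)) ≠ 0 :=
    prod_ne_zero_iff.2 fun i _ => sub_ne_zero.2 (hq i).symm
  have hlast : 1 - q ^ (n + 1) ≠ 0 := sub_ne_zero.2 (hq n).symm
  rw [gaussBinom_eq_div hr, gaussBinom_eq_div (by omega), gaussBinom_eq_div (by omega),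
    prod_range_succ' (fun i => 1 - q ^ (r + i)), prod_range_succ, prod_range_succ, add_zero]
  have hshift : ∏ i ∈ range n, (1 - q ^ (r + (i + 1))) = ∏ i ∈ range n, (1 - q ^ (r + 1 + i)) :=
    prod_congr rfl fun i _ => by rw [add_right_comm, add_assoc]
  rw [hshift]
  field_simp
  ring

lemma gaussBinom_succ_eq_sum_antidiagonal (hq : ∀ k : ℕ, q ^ (k + 1) ≠ 1) {r : ℕ} (hr : 1 ≤ r)
    (n : ℕ) :
    gaussBinom q (r + 1) n = ∑ p ∈ antidiagonal n, q ^ (r * p.1) * gaussBinom q r p.2 := by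
  induction n with
  | zero => simp [gaussBinom]
  | succ n ih =>
    rw [Nat.sum_antidiagonal_succ, gaussBinom_succ_succ hq hr n, ih, mul_sum]
    simp only [mul_zero, pow_zero, one_mul, mul_add_one, pow_add, mul_assoc]
    exact congrArg _ (sum_congr rfl fun _ _ => mul_left_comm _ _ _)

lemma sum_finAntidiagonal_succ {M : Type*} [AddCommMonoid M] (d n : ℕ)
    (f : (Fin (d + 1) → ℕ) → M) :
    ∑ x ∈ finAntidiagonal (d + 1) n, f x =
      ∑ p ∈ antidiagonal n, ∑ x ∈ finAntidiagonal d p.2, f (Fin.cons p.1 x) := by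
  rw [← sum_sigma (antidiagonal n) (fun p => finAntidiagonal d p.2) fun z => f (Fin.cons z.1.1 z.2)]
  refine sum_nbij' (fun x => ⟨(x 0, ∑ j : Fin d, x j.succ), Fin.tail x⟩)
    (fun z => Fin.cons z.1.1 z.2)
    ?_ ?_ (fun x _ => Fin.cons_self_tail x) ?_ (fun x _ => by rw [Fin.cons_self_tail])
  · intro x hx
    simp_all [Fin.sum_univ_succ, Fin.tail]
  · rintro ⟨⟨a, b⟩, y⟩ hz
    simp_all [Fin.sum_univ_succ]
  · rintro ⟨⟨a, b⟩, y⟩ hz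
    simp_all

lemma sum_finAntidiagonal_pow_eq_gaussBinom (hq : ∀ k : ℕ, q ^ (k + 1) ≠ 1) {r : ℕ} (hr : 1 ≤ r)
    (n : ℕ) :
    ∑ m ∈ finAntidiagonal r n, q ^ (∑ j : Fin r, (r - 1 - j) * m j) = gaussBinom q r n := by
  induction r, hr using Nat.le_induction generalizing n with
  | base =>
    have : finAntidiagonal 1 n = {fun _ => n} := by
      ext f
      simp [funext_iff, Fin.forall_fin_one]
    simp [this, gaussBinom_one hq]
  | succ r hr ih =>
    rw [sum_finAntidiagonal_succ, gaussBinom_succ_eq_sum_antidiagonal hq hr n]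
    refine sum_congr rfl fun p _ => ?_
    rw [← ih p.2, mul_sum]
    refine sum_congr rfl fun m _ => ?_
    simp only [Fin.sum_univ_succ, Fin.cons_zero, Fin.cons_succ, Fin.val_zero, Fin.val_succ,
      pow_add]
    congr 3 with j
    rw [show r + 1 - 1 - (j + 1) = r - 1 - j by omega]

end GaussBinom

section Analysis

lemma norm_ofReal_cpow_le_max {a b t : ℝ} (ha : 0 < a) (hat : a ≤ t) (htb : t ≤ b) (s : ℂ) :
    ‖(t : ℂ) ^ s‖ ≤ max (a ^ s.re) (b ^ s.re) := by
  rw [Complex.norm_cpow_eq_rpow_re_of_pos (ha.trans_le hat)]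
  rcases le_total 0 s.re with hs | hs
  · exact (Real.rpow_le_rpow (ha.le.trans hat) htb hs).trans (le_max_right _ _)
  · exact (Real.rpow_le_rpow_of_nonpos ha hat hs).trans (le_max_left _ _)

lemma summable_fin_prod_of_nonneg {α : Type*} {f : α → ℝ} (hf : Summable f) (hf0 : 0 ≤ f) :
    ∀ r : ℕ, Summable fun m : Fin r → α => ∏ j, f (m j)
  | 0 => .of_finite
  | r + 1 => by
    rw [← (Fin.consEquiv fun _ => α).summable_iff]
    refine (hf.mul_of_nonneg (summable_fin_prod_of_nonneg hf hf0 r) hf0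
      fun m => prod_nonneg fun j _ => hf0 _).congr fun p => ?_
    simp [Fin.prod_univ_succ]

lemma tsum_eq_tsum_sum_finAntidiagonal {M : Type*} [AddCommGroup M] [UniformSpace M]
    [IsUniformAddGroup M] [CompleteSpace M] [T2Space M] {r : ℕ} {f : (Fin r → ℕ) → M}
    (hf : Summable f) :
    ∑' m, f m = ∑' n, ∑ m ∈ finAntidiagonal r n, f m := by
  refine (hf.hasSum.tsum_fiberwise fun m : Fin r → ℕ => ∑ j, m j).tsum_eq.symm.trans
    (tsum_congr fun n => ?_)
  have hfiber : (fun m : Fin r → ℕ => ∑ j, m j) ⁻¹' {n} = finAntidiagonal r n := by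
    ext; simp
  rw [hfiber, Finset.tsum_subtype']

end Analysis

section QNumber

variable {q : ℝ}

lemma qnum_pos (hq0 : 0 < q) (hq1 : q < 1) {y : ℝ} (hy : 0 < y) : 0 < qnum q y :=
  div_pos (sub_pos.2 (Real.rpow_lt_one hq0.le hq1 hy)) (sub_pos.2 hq1)

lemma qnum_monotone (hq0 : 0 < q) (hq1 : q < 1) : Monotone (qnum q) := fun y z hyz => by
  have := Real.rpow_le_rpow_of_exponent_ge hq0 hq1.le hyz
  unfold qnum
  gcongr

lemma qnum_le_inv_one_sub (hq0 : 0 < q) (hq1 : q < 1) (y : ℝ) : qnum q y ≤ (1 - q)⁻¹ := by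
  have := Real.rpow_pos_of_pos hq0 y
  rw [qnum, div_eq_mul_inv]
  exact mul_le_of_le_one_left (inv_nonneg.2 (sub_pos.2 hq1).le) (by linarith)

end QNumber

lemma sum_sub_add_one_mul_eq (h : ℤ) (r : ℕ) (m : Fin r → ℕ) :
    ∑ j : Fin r, (h - ((j : ℤ) + 1) + 1) * (m j : ℤ) =
      (h - r + 1) * ((∑ j, m j : ℕ) : ℤ) + ((∑ j : Fin r, (r - 1 - j) * m j : ℕ) : ℤ) := by
  push_cast
  rw [mul_sum, ← sum_add_distrib]
  refine sum_congr rfl fun j _ => ?_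
  have := j.isLt
  rw [Nat.cast_sub (by omega), Nat.cast_sub (by omega)]
  push_cast
  ring

section QMultiSeries

noncomputable def qMultiSummand (r : ℕ) (h : ℤ) (q x : ℝ) (s : ℂ) (m : Fin r → ℕ) : ℂ :=
  (-1 : ℂ) ^ (∑ j, m j) * ((q ^ (∑ j : Fin r, (h - ((j : ℤ) + 1) + 1) * (m j : ℤ)) : ℝ) : ℂ) *
    ((qnum q (((∑ j, m j : ℕ) : ℝ) + x) : ℝ) : ℂ) ^ (-s)

variable {r : ℕ} {h : ℤ} {q x : ℝ} {s : ℂ}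

lemma qMultiSummand_eq (hq : q ≠ 0) (m : Fin r → ℕ) :
    qMultiSummand r h q x s m =
      (((-q ^ (h - r + 1 : ℤ)) ^ (∑ j, m j) : ℝ) : ℂ) *
        ((qnum q (((∑ j, m j : ℕ) : ℝ) + x) : ℝ) : ℂ) ^ (-s) *
          ((q ^ (∑ j : Fin r, (r - 1 - j) * m j) : ℝ) : ℂ) := by
  rw [qMultiSummand, sum_sub_add_one_mul_eq, zpow_add₀ hq, zpow_mul, zpow_natCast, zpow_natCast]
  push_cast
  ring

lemma norm_qMultiSummand_le (hh : (r : ℤ) ≤ h) (hq0 : 0 < q) (hq1 : q < 1) (hx : 0 < x)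
    (m : Fin r → ℕ) : ‖qMultiSummand r h q x s m‖ ≤
      max (qnum q x ^ (-s).re) ((1 - q)⁻¹ ^ (-s).re) * ∏ j, q ^ m j := by
  have hpow : q ^ (h - r + 1 : ℤ) ≤ q := by
    simpa using zpow_le_zpow_right_of_le_one₀ hq0 hq1.le (by omega : (1 : ℤ) ≤ h - r + 1)
  have hcpow := norm_ofReal_cpow_le_max (qnum_pos hq0 hq1 hx)
    (qnum_monotone hq0 hq1 (le_add_of_nonneg_left (Nat.cast_nonneg (∑ j, m j))))
    (qnum_le_inv_one_sub hq0 hq1 _) (-s)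
  rw [qMultiSummand_eq hq0.ne', norm_mul, norm_mul, Complex.norm_real, Complex.norm_real,
    norm_pow, norm_neg, Real.norm_of_nonneg (zpow_pos hq0 _).le,
    Real.norm_of_nonneg (pow_pos hq0 _).le, prod_pow_eq_pow_sum]
  calc _ ≤ q ^ (∑ j, m j) * max (qnum q x ^ (-s).re) ((1 - q)⁻¹ ^ (-s).re) * 1 := by
        gcongr
        exact pow_le_one₀ hq0.le hq1.le
    _ = _ := by ring

lemma summable_qMultiSummand (hh : (r : ℤ) ≤ h) (hq0 : 0 < q) (hq1 : q < 1) (hx : 0 < x) :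
    Summable (qMultiSummand r h q x s) :=
  .of_norm_bounded (((summable_fin_prod_of_nonneg (summable_geometric_of_lt_one hq0.le hq1)
    fun n => pow_nonneg hq0.le n) r).mul_left _) (norm_qMultiSummand_le hh hq0 hq1 hx)

lemma sum_finAntidiagonal_qMultiSummand (hr : 1 ≤ r) (hq0 : 0 < q) (hq1 : q < 1) (n : ℕ) :
    ∑ m ∈ finAntidiagonal r n, qMultiSummand r h q x s m =
      ((gaussBinom q r n : ℝ) : ℂ) * (((-(q ^ (h - r + 1 : ℤ))) ^ n : ℝ) : ℂ) *
        ((qnum q ((n : ℝ) + x) : ℝ) : ℂ) ^ (-s) := by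
  have hq : ∀ k : ℕ, q ^ (k + 1) ≠ 1 := fun k => (pow_lt_one₀ hq0.le hq1 k.succ_ne_zero).ne
  rw [sum_congr rfl fun m hm => by rw [qMultiSummand_eq hq0.ne', mem_finAntidiagonal.1 hm],
    ← mul_sum, ← Complex.ofReal_sum, sum_finAntidiagonal_pow_eq_gaussBinom hq hr]
  ring

end QMultiSeries

theorem stmt8 (r : ℕ) (hr : 1 ≤ r) (h : ℤ) (hh : (r : ℤ) ≤ h)
    (q : ℝ) (hq0 : 0 < q) (hq1 : q < 1) (x : ℝ) (hx : 0 < x) (s : ℂ) :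
    Summable (fun m : Fin r → ℕ =>
      (-1 : ℂ) ^ (∑ j, m j) *
        ((q ^ (∑ j : Fin r, (h - ((j : ℤ) + 1) + 1) * (m j : ℤ)) : ℝ) : ℂ) *
          ((qnum q (((∑ j, m j : ℕ) : ℝ) + x) : ℝ) : ℂ) ^ (-s)) ∧
    (∑' m : Fin r → ℕ,
        (-1 : ℂ) ^ (∑ j, m j) *
          ((q ^ (∑ j : Fin r, (h - ((j : ℤ) + 1) + 1) * (m j : ℤ)) : ℝ) : ℂ) *
            ((qnum q (((∑ j, m j : ℕ) : ℝ) + x) : ℝ) : ℂ) ^ (-s))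
      = ∑' m : ℕ,
          ((gaussBinom q r m : ℝ) : ℂ) * (((-(q ^ (h - r + 1 : ℤ))) ^ m : ℝ) : ℂ) *
            ((qnum q ((m : ℝ) + x) : ℝ) : ℂ) ^ (-s) := by
  change Summable (qMultiSummand r h q x s) ∧ ∑' m, qMultiSummand r h q x s m = _
  have hsum := summable_qMultiSummand (s := s) hh hq0 hq1 hx
  refine ⟨hsum, ?_⟩
  rw [tsum_eq_tsum_sum_finAntidiagonal hsum]
  exact tsum_congr (sum_finAntidiagonal_qMultiSummand hr hq0 hq1)
end

section
/- Let f be an odd positive integer, let χ be a Dirichlet character modulo f with values in ℂ (extended to ℕ by χ(m) := χ(m mod f)), let r ≥ 1 and n ≥ 0 be integers, let h be an integer with h ≥ r, let q be a real number with 0 < q < 1, and let x > 0 be real. Then [2]_q^r · Σ_{(m_1,…,m_r) ∈ ℕ^r} (-1)^{m_1+⋯+m_r} q^{Σ_{j=1}^r (h-j+1) m_j} (∏_{j=1}^r χ(m_j)) [m_1+⋯+m_r+x]_q^n = ([2]_q^r/(1-q)^n) · Σ_{(a_1,…,a_r) ∈ {0,…,f-1}^r} (-1)^{a_1+⋯+a_r}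 (∏_{j=1}^r χ(a_j)) · Σ_{l=0}^{n} C(n,l) (-1)^l q^{l x} q^{Σ_{j=1}^r (h-j+l+1) a_j} / ∏_{j=1}^{r} (1+q^{(h-j+l+1) f}). -/
open Finset

section

variable {𝕜 : Type*} [NormedField 𝕜]

theorem summable_norm_fin_prod {β : Type*} {r : ℕ} {g : Fin r → β → 𝕜}
    (hg : ∀ j, Summable fun b => ‖g j b‖) :
    Summable fun m : Fin r → β => ‖∏ j, g j (m j)‖ := by
  induction r with
  | zero => exact .of_finite
  | succ r ih =>
    rw [← (Fin.consEquiv fun _ => β).summable_iff]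
    refine ((hg 0).mul_of_nonneg (ih fun j => hg j.succ) (fun _ => norm_nonneg _)
      (fun _ => norm_nonneg _)).congr fun p => ?_
    simp [Fin.prod_univ_succ]

theorem tsum_fin_prod [CompleteSpace 𝕜] {β : Type*} {r : ℕ} {g : Fin r → β → 𝕜}
    (hg : ∀ j, Summable fun b => ‖g j b‖) :
    ∑' m : Fin r → β, ∏ j, g j (m j) = ∏ j, ∑' b, g j b := by
  induction r with
  | zero => simp
  | succ r ih =>
    rw [← (Fin.consEquiv fun _ => β).tsum_eq, Fin.prod_univ_succ, ← ih fun j => hg j.succ,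
      tsum_mul_tsum_of_summable_norm (hg 0) (summable_norm_fin_prod fun j => hg j.succ)]
    simp [Fin.prod_univ_succ]

theorem summable_norm_mul_geometric_of_periodic {ψ : ℕ → 𝕜} {f : ℕ}
    (hψ : Function.Periodic ψ f) (hf : 0 < f) {w : 𝕜} (hw : ‖w‖ < 1) :
    Summable fun m => ‖ψ m * w ^ m‖ := by
  have hbound : ∀ m, ‖ψ m‖ ≤ ∑ a ∈ range f, ‖ψ a‖ := fun m => by
    rw [← hψ.map_mod_nat m]
    exact single_le_sum (fun a _ => norm_nonneg (ψ a)) (mem_range.2 (Nat.mod_lt m hf))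
  refine .of_nonneg_of_le (fun _ => norm_nonneg _) (fun m => ?_)
    ((summable_geometric_of_lt_one (norm_nonneg w) hw).mul_left (∑ a ∈ range f, ‖ψ a‖))
  rw [norm_mul, norm_pow]
  exact mul_le_mul_of_nonneg_right (hbound m) (by positivity)

theorem hasSum_mul_geometric_of_periodic [CompleteSpace 𝕜] {ψ : ℕ → 𝕜} {f : ℕ}
    (hψ : Function.Periodic ψ f) (hf : 0 < f) {w : 𝕜} (hw : ‖w‖ < 1) :
    HasSum (fun m => ψ m * w ^ m) ((∑ a : Fin f, ψ a * w ^ (a : ℕ)) / (1 - w ^ f)) := by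
  have hs := (summable_norm_mul_geometric_of_periodic hψ hf hw).of_norm
  have hwf : 1 - w ^ f ≠ 0 := by
    refine sub_ne_zero.2 (fun h => ?_)
    have := pow_lt_one₀ (norm_nonneg w) hw hf.ne'
    rw [← norm_pow, ← h, norm_one] at this
    exact this.false
  have hshift : ∑' m, ψ (m + f) * w ^ (m + f) = (∑' m, ψ m * w ^ m) * w ^ f := by
    rw [← tsum_mul_right]
    exact tsum_congr fun m => by rw [hψ m, pow_add]; ring
  suffices ∑' m, ψ m * w ^ m = (∑ a : Fin f, ψ a * w ^ (a : ℕ)) / (1 - w ^ f) from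
    this ▸ hs.hasSum
  rw [eq_div_iff hwf, ← sum_range fun a => ψ a * w ^ a, mul_sub, mul_one,
    sub_eq_iff_eq_add, ← hshift, hs.sum_add_tsum_nat_add]

theorem hasSum_fin_prod_mul_geometric_of_periodic [CompleteSpace 𝕜] {ψ : ℕ → 𝕜} {f : ℕ}
    (hψ : Function.Periodic ψ f) (hf : 0 < f) {r : ℕ} {w : Fin r → 𝕜}
    (hw : ∀ j, ‖w j‖ < 1) :
    HasSum (fun m : Fin r → ℕ => ∏ j, ψ (m j) * w j ^ m j)
      ((∑ a : Fin r → Fin f, ∏ j, ψ (a j) * w j ^ (a j : ℕ)) / ∏ j, (1 - w j ^ f)) := by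
  have hg j := summable_norm_mul_geometric_of_periodic hψ hf (hw j)
  rw [(summable_norm_fin_prod hg).of_norm.hasSum_iff, tsum_fin_prod hg,
    prod_congr rfl fun j _ => (hasSum_mul_geometric_of_periodic hψ hf (hw j)).tsum_eq,
    prod_div_distrib, prod_univ_sum, Fintype.piFinset_univ]

end

theorem prod_zpow_eq_zpow_sum₀ {ι G₀ : Type*} [CommGroupWithZero G₀] {a : G₀} (ha : a ≠ 0)
    (s : Finset ι) (e : ι → ℤ) : ∏ i ∈ s, a ^ e i = a ^ ∑ i ∈ s, e i := by
  classical
  induction s using Finset.induction_on with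
  | empty => simp
  | insert i s hi ih => rw [prod_insert hi, sum_insert hi, ih, zpow_add₀ ha]

theorem prod_mul_neg_zpow_pow {ι K : Type*} [Field K] {a : K} (ha : a ≠ 0) (s : Finset ι)
    (c : ι → K) (e : ι → ℤ) (m : ι → ℕ) :
    ∏ i ∈ s, c i * (-(a ^ e i)) ^ m i
      = (-1) ^ (∑ i ∈ s, m i) * (∏ i ∈ s, c i) * a ^ ∑ i ∈ s, e i * m i := by
  have hterm : ∀ i, c i * (-(a ^ e i)) ^ m i = (-1) ^ m i * c i * a ^ (e i * m i) := fun i => by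
    rw [neg_pow, zpow_mul, zpow_natCast]
    ring
  simp only [hterm, prod_mul_distrib, prod_pow_eq_pow_sum, prod_zpow_eq_zpow_sum₀ ha]

theorem qnum_natCast_add_pow {q : ℝ} (hq : 0 < q) (N n : ℕ) (x : ℝ) :
    qnum q (N + x) ^ n = (∑ l ∈ range (n + 1),
      (n.choose l : ℝ) * (-1) ^ l * q ^ ((l : ℝ) * x) * (q ^ N) ^ l) / (1 - q) ^ n := by
  rw [qnum, div_pow, sub_eq_neg_add, add_pow]
  congr 1
  refine sum_congr rfl fun l _ => ?_
  rw [Real.rpow_add hq, Real.rpow_natCast, mul_comm (l : ℝ) x, Real.rpow_mul hq.le,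
    Real.rpow_natCast]
  ring

theorem neg_one_pow_mul_zpow_mul_qnum_pow {r : ℕ} {q : ℝ} (hq : 0 < q) (e : Fin r → ℤ) (c : ℂ)
    (m : Fin r → ℕ) (n : ℕ) (x : ℝ) :
    (-1 : ℂ) ^ (∑ j, m j) * ((q ^ (∑ j, e j * (m j : ℤ)) : ℝ) : ℂ) * c *
        ((qnum q (((∑ j, m j : ℕ) : ℝ) + x) ^ n : ℝ) : ℂ)
      = ∑ l ∈ range (n + 1),
          (n.choose l : ℂ) * (-1) ^ l * ((q ^ ((l : ℝ) * x) : ℝ) : ℂ) / (1 - (q : ℂ)) ^ n *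
            ((-1) ^ (∑ j, m j) * c * (q : ℂ) ^ ∑ j, (e j + l) * (m j : ℤ)) := by
  have hq' : (q : ℂ) ≠ 0 := Complex.ofReal_ne_zero.2 hq.ne'
  have hexp (l : ℕ) : (q : ℂ) ^ ∑ j, (e j + l) * (m j : ℤ)
      = (q : ℂ) ^ (∑ j, e j * (m j : ℤ)) * ((q : ℂ) ^ (∑ j, m j)) ^ l := by
    rw [← pow_mul, ← zpow_natCast, ← zpow_add₀ hq']
    push_cast
    rw [sum_mul, ← sum_add_distrib]
    exact congrArg _ (sum_congr rfl fun j _ => by ring)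
  rw [qnum_natCast_add_pow hq]
  push_cast
  rw [sum_div, mul_sum]
  exact sum_congr rfl fun l _ => by rw [hexp]; ring

theorem stmt11_general (f : ℕ) (hf : Odd f) (χ : DirichletCharacter ℂ f)
    (r : ℕ) (n : ℕ) (h : ℤ) (hh : (r : ℤ) ≤ h)
    (q : ℝ) (hq0 : 0 < q) (hq1 : q < 1) (x : ℝ) :
    (1 + (q : ℂ)) ^ r * ∑' m : Fin r → ℕ,
        (-1 : ℂ) ^ (∑ j, m j) *
          ((q ^ (∑ j : Fin r, (h - ((j : ℤ) + 1) + 1) * (m j : ℤ)) : ℝ) : ℂ) *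
            (∏ j, χ ((m j : ℕ) : ZMod f)) *
              ((qnum q (((∑ j, m j : ℕ) : ℝ) + x) ^ n : ℝ) : ℂ)
      = ((1 + (q : ℂ)) ^ r / (1 - (q : ℂ)) ^ n) *
          ∑ a : Fin r → Fin f,
            (-1 : ℂ) ^ (∑ j, (a j : ℕ)) * (∏ j, χ (((a j : ℕ) : ℕ) : ZMod f)) *
              ∑ l ∈ Finset.range (n + 1),
                (n.choose l : ℂ) * (-1) ^ l * ((q ^ ((l : ℝ) * x) : ℝ) : ℂ) *
                  ((q ^ (∑ j : Fin r, (h - ((j : ℤ) + 1) + l + 1) * ((a j : ℕ) : ℤ)) : ℝ) : ℂ) /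
                    ∏ j : Fin r, (1 + ((q ^ ((h - ((j : ℤ) + 1) + l + 1) * f) : ℝ) : ℂ)) := by
  have hq : (q : ℂ) ≠ 0 := Complex.ofReal_ne_zero.2 hq0.ne'
  set E : ℕ → Fin r → ℤ := fun l j => h - ((j : ℤ) + 1) + l + 1
  set w : ℕ → Fin r → ℂ := fun l j => -((q : ℂ) ^ E l j)
  set K : ℕ → ℂ := fun l =>
    (n.choose l : ℂ) * (-1) ^ l * ((q ^ ((l : ℝ) * x) : ℝ) : ℂ) / (1 - (q : ℂ)) ^ n
  have hw l j : ‖w l j‖ < 1 := by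
    have : 0 < E l j := by have := j.2; simp only [E]; omega
    simpa [w, Complex.norm_real, abs_of_pos hq0] using zpow_lt_one₀ hq0 hq1 this
  have hdenom l : ∏ j, (1 - w l j ^ f) = ∏ j : Fin r, (1 + ((q ^ (E l j * f) : ℝ) : ℂ)) :=
    prod_congr rfl fun j _ => by
      rw [hf.neg_pow, sub_neg_eq_add, Complex.ofReal_zpow, zpow_mul, zpow_natCast]
  have hsummand (m : Fin r → ℕ) :
      (-1 : ℂ) ^ (∑ j, m j) *
          ((q ^ (∑ j : Fin r, (h - ((j : ℤ) + 1) + 1) * (m j : ℤ)) : ℝ) : ℂ) *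
            (∏ j, χ ((m j : ℕ) : ZMod f)) *
              ((qnum q (((∑ j, m j : ℕ) : ℝ) + x) ^ n : ℝ) : ℂ)
        = ∑ l ∈ range (n + 1), K l * ∏ j, χ (m j) * w l j ^ m j := by
    have hE l j : E l j = h - ((j : ℤ) + 1) + 1 + l := by ring
    simp only [neg_one_pow_mul_zpow_mul_qnum_pow hq0, w, hE, prod_mul_neg_zpow_pow hq, K]
  rw [tsum_congr hsummand, (hasSum_sum fun l _ => ((hasSum_fin_prod_mul_geometric_of_periodic
    (ψ := fun k : ℕ => χ k) (fun k => by simp) hf.pos (hw l)).mul_left (K l))).tsum_eq]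
  simp only [hdenom, w, prod_mul_neg_zpow_pow hq, Complex.ofReal_zpow, mul_sum, sum_div]
  rw [sum_comm]
  refine sum_congr rfl fun a _ => sum_congr rfl fun l _ => ?_
  simp only [K, E]
  ring

theorem stmt11 (f : ℕ) (hf0 : 0 < f) (hf : Odd f) (χ : DirichletCharacter ℂ f)
    (r : ℕ) (hr : 1 ≤ r) (n : ℕ) (h : ℤ) (hh : (r : ℤ) ≤ h)
    (q : ℝ) (hq0 : 0 < q) (hq1 : q < 1) (x : ℝ) (hx : 0 < x) :
    (1 + (q : ℂ)) ^ r * ∑' m : Fin r → ℕ,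
        (-1 : ℂ) ^ (∑ j, m j) *
          ((q ^ (∑ j : Fin r, (h - ((j : ℤ) + 1) + 1) * (m j : ℤ)) : ℝ) : ℂ) *
            (∏ j, χ ((m j : ℕ) : ZMod f)) *
              ((qnum q (((∑ j, m j : ℕ) : ℝ) + x) ^ n : ℝ) : ℂ)
      = ((1 + (q : ℂ)) ^ r / (1 - (q : ℂ)) ^ n) *
          ∑ a : Fin r → Fin f,
            (-1 : ℂ) ^ (∑ j, (a j : ℕ)) * (∏ j, χ (((a j : ℕ) : ℕ) : ZMod f)) *
              ∑ l ∈ Finset.range (n + 1),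
                (n.choose l : ℂ) * (-1) ^ l * ((q ^ ((l : ℝ) * x) : ℝ) : ℂ) *
                  ((q ^ (∑ j : Fin r, (h - ((j : ℤ) + 1) + l + 1) * ((a j : ℕ) : ℤ)) : ℝ) : ℂ) /
                    ∏ j : Fin r, (1 + ((q ^ ((h - ((j : ℤ) + 1) + l + 1) * f) : ℝ) : ℂ)) :=
  stmt11_general f hf χ r n h hh q hq0 hq1 x
end
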